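/- arXiv:1906.10287 — 3 statements merged into one kernel-verified Lean document; each statement's English description precedes it below -/
import Mathlib

section
/- Let X be a Banach space, V a normed space, and T₀, T₁ : X → V bounded linear operators. For t ∈ [0,1] set T_t = (1-t)T₀ + tT₁. Suppose there is a constant C > 0 such that ‖x‖_X ≤ C‖T_t x‖_V for all t ∈ [0,1] and all x ∈ X. Then T₀ is surjective if and only if T₁ is surjective. -/
/-!
A surjective `A` with `‖x‖ ≤ C‖Ax‖` is an isomorphism whose inverse has norm at most `C`, so
`A + P = A (1 + A⁻¹P)` is again surjective as soon as `C‖P‖ < 1`, by the Neumann series in the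
Banach algebra of operators on `X`. Since the a priori bound holds with the same `C` along the
whole segment, surjectivity of `T_s` and of `T_t` are equivalent for `t` near `s`, and
connectedness of `[0,1]` propagates this equivalence from `0` to `1`.
-/

open Function Filter Set Topology

namespace ContinuousLinearMap

variable {𝕜 X V : Type*} [NontriviallyNormedField 𝕜] [NormedAddCommGroup X] [NormedSpace 𝕜 X]
  [NormedAddCommGroup V] [NormedSpace 𝕜 V]

theorem exists_continuousLinearEquiv_of_surjective_of_bound {A : X →L[𝕜] V} {C : ℝ}
    (hC : 0 ≤ C) (hA : Surjective A) (hbound : ∀ x, ‖x‖ ≤ C * ‖A x‖) :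
    ∃ e : X ≃L[𝕜] V, (e : X →L[𝕜] V) = A ∧ ‖(e.symm : V →L[𝕜] X)‖ ≤ C := by
  have hinj : Injective A := by
    refine (injective_iff_map_eq_zero A).2 fun x hx => norm_eq_zero.1 ?_
    exact le_antisymm (by simpa [hx] using hbound x) (norm_nonneg x)
  let e₀ := LinearEquiv.ofBijective (A : X →ₗ[𝕜] V) ⟨hinj, hA⟩
  have he₀ : ∀ v, ‖e₀.symm v‖ ≤ C * ‖v‖ := fun v => by
    have hv : A (e₀.symm v) = v := e₀.apply_symm_apply v
    simpa only [hv] using hbound (e₀.symm v)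
  refine ⟨e₀.toContinuousLinearEquivOfBounds ‖A‖ C A.le_opNorm he₀, rfl, ?_⟩
  exact opNorm_le_bound _ hC he₀

variable [CompleteSpace X]

theorem surjective_add_of_norm_lt {A P : X →L[𝕜] V} {C : ℝ} (hC : 0 ≤ C)
    (hA : Surjective A) (hbound : ∀ x, ‖x‖ ≤ C * ‖A x‖) (hP : C * ‖P‖ < 1) :
    Surjective (A + P) := by
  obtain ⟨e, rfl, he⟩ := exists_continuousLinearEquiv_of_surjective_of_bound hC hA hbound
  set B : X →L[𝕜] X := (e.symm : V →L[𝕜] X) ∘L P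
  have hB : ‖-B‖ < 1 := by
    rw [norm_neg]
    exact (opNorm_comp_le _ _).trans_lt
      ((mul_le_mul_of_nonneg_right he (norm_nonneg P)).trans_lt hP)
  have hfactor : (e : X →L[𝕜] V) + P = (e : X →L[𝕜] V) ∘L (1 - -B) := by
    ext x
    simp [B]
  rw [hfactor, coe_comp]
  exact e.surjective.comp (isUnit_iff_bijective.1 (isUnit_one_sub_of_norm_lt_one hB)).2

theorem surjective_iff_of_norm_sub_lt {A B : X →L[𝕜] V} {C : ℝ} (hC : 0 ≤ C)
    (hA : ∀ x, ‖x‖ ≤ C * ‖A x‖) (hB : ∀ x, ‖x‖ ≤ C * ‖B x‖) (hAB : C * ‖B - A‖ < 1) :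
    Surjective A ↔ Surjective B := by
  refine ⟨fun hsurj => ?_, fun hsurj => ?_⟩
  · simpa only [add_sub_cancel] using surjective_add_of_norm_lt hC hsurj hA hAB
  · have hBA : C * ‖A - B‖ < 1 := by rwa [norm_sub_rev]
    simpa only [add_sub_cancel] using surjective_add_of_norm_lt hC hsurj hB hBA

end ContinuousLinearMap

/-- The method of continuity: if `T₀, T₁ : X → V` are bounded linear operators from a Banach
space to a normed space, `T_t = (1-t)T₀ + tT₁`, and `‖x‖ ≤ C‖T_t x‖` uniformly in `t ∈ [0,1]`,
then `T₀` is surjective iff `T₁` is surjective. -/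
theorem method_of_continuity
    {X V : Type*} [NormedAddCommGroup X] [NormedSpace ℝ X] [CompleteSpace X]
    [NormedAddCommGroup V] [NormedSpace ℝ V]
    (T₀ T₁ : X →L[ℝ] V) (C : ℝ) (hC : 0 < C)
    (h : ∀ t ∈ Set.Icc (0:ℝ) 1, ∀ x : X, ‖x‖ ≤ C * ‖((1 - t) • T₀ + t • T₁) x‖) :
    Function.Surjective T₀ ↔ Function.Surjective T₁ := by
  set T : ℝ → X →L[ℝ] V := fun t => (1 - t) • T₀ + t • T₁
  have hnear : ∀ s ∈ Icc (0:ℝ) 1,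
      ∀ᶠ t in 𝓝[Icc 0 1] s, (Surjective (T s) ↔ Surjective (T t)) := by
    intro s hs
    have hclose : ∀ᶠ t in 𝓝 s, C * ‖T t - T s‖ < 1 :=
      ContinuousAt.eventually_lt (by fun_prop) continuousAt_const (by simp)
    filter_upwards [nhdsWithin_le_nhds hclose, self_mem_nhdsWithin] with t hts ht
    exact ContinuousLinearMap.surjective_iff_of_norm_sub_lt hC.le (h s hs) (h t ht) hts
  have hiff := isPreconnected_Icc.induction₂ (fun s t => Surjective (T s) ↔ Surjective (T t))
    hnear (fun _ _ _ _ _ _ => Iff.trans) (fun _ _ _ _ => Iff.symm)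
    (left_mem_Icc.2 zero_le_one) (right_mem_Icc.2 zero_le_one)
  simpa [T] using hiff
end

section
/- For a > 0 and s ∈ (0,1), the function G_a(η) = η^s/(η^s + a) defined for η > 0 satisfies, for every natural number n, the bound |G_a^{(n)}(η)| ≤ C η^{-n} for all η > 0, where C depends only on n, s, and a. -/
/-!
`G(η) = η^s / (η^s + a)` solves the logistic Euler equation `η G' = s G (1 - G)` on `(0, ∞)`.
Differentiating such an equation repeatedly gives `G^{(n)}(η) = P_n(G(η)) / η^n` for polynomials
`P_n`, and since `G` takes values in `[0, 1]`, the factor `P_n(G(η))` is bounded.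
-/

open Real Polynomial Set

/-- If `η f'(η) = Q(f(η))`, then `f^{(n)}(η) = (iteratedDerivPoly Q n)(f(η)) / η^n`. -/
noncomputable def iteratedDerivPoly (Q : ℝ[X]) : ℕ → ℝ[X]
  | 0 => X
  | k + 1 => Q * derivative (iteratedDerivPoly Q k) - (k : ℝ) • iteratedDerivPoly Q k

section EulerODE

variable {f : ℝ → ℝ} {Q : ℝ[X]}

theorem hasDerivAt_eval_comp_div_pow (hf : ∀ η, 0 < η → HasDerivAt f (Q.eval (f η) / η) η)
    (P : ℝ[X]) (k : ℕ) {η : ℝ} (hη : 0 < η) :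
    HasDerivAt (fun t => P.eval (f t) / t ^ k)
      ((Q * derivative P - (k : ℝ) • P).eval (f η) / η ^ (k + 1)) η := by
  have hP := (P.hasDerivAt (f η)).comp η (hf η hη)
  refine (hP.fun_div (hasDerivAt_pow k η) (pow_pos hη k).ne').congr_deriv ?_
  simp only [eval_sub, eval_mul, eval_smul, smul_eq_mul, Function.comp_apply]
  rcases k with _ | k
  · simp only [pow_zero, CharP.cast_eq_zero]
    ring
  · field_simp
    push_cast
    ring

theorem iteratedDeriv_eq_eval_iteratedDerivPoly_div_pow
    (hf : ∀ η, 0 < η → HasDerivAt f (Q.eval (f η) / η) η) (n : ℕ) {η : ℝ} (hη : 0 < η) :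
    iteratedDeriv n f η = (iteratedDerivPoly Q n).eval (f η) / η ^ n := by
  induction n generalizing η with
  | zero => simp [iteratedDerivPoly]
  | succ k ih =>
    have hloc : iteratedDeriv k f =ᶠ[nhds η]
        fun t => (iteratedDerivPoly Q k).eval (f t) / t ^ k :=
      Filter.eventuallyEq_of_mem (Ioi_mem_nhds hη) fun t ht => ih ht
    rw [iteratedDeriv_succ, hloc.deriv_eq,
      (hasDerivAt_eval_comp_div_pow hf _ k hη).deriv, iteratedDerivPoly]

theorem exists_abs_iteratedDeriv_le_mul_rpow_neg
    (hf : ∀ η, 0 < η → HasDerivAt f (Q.eval (f η) / η) η) {K : Set ℝ} (hK : IsCompact K)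
    (hfK : MapsTo f (Ioi 0) K) (n : ℕ) :
    ∃ C > 0, ∀ η : ℝ, 0 < η → |iteratedDeriv n f η| ≤ C * η ^ (-(n : ℝ)) := by
  obtain ⟨C, hC⟩ :=
    hK.exists_bound_of_continuousOn (iteratedDerivPoly Q n).continuous.continuousOn
  refine ⟨max C 1, by positivity, fun η hη => ?_⟩
  rw [iteratedDeriv_eq_eval_iteratedDerivPoly_div_pow hf n hη, rpow_neg hη.le, rpow_natCast,
    abs_div, abs_of_pos (pow_pos hη n), div_eq_mul_inv]
  gcongr
  exact (hC _ (hfK hη)).trans (le_max_left C 1)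

end EulerODE

theorem hasDerivAt_rpow_div_rpow_add (a s : ℝ) {η : ℝ} (hη : 0 < η) (h : η ^ s + a ≠ 0) :
    HasDerivAt (fun t => t ^ s / (t ^ s + a))
      (s * (η ^ s / (η ^ s + a)) * (1 - η ^ s / (η ^ s + a)) / η) η := by
  have hpow : HasDerivAt (fun t => t ^ s) (s * (η ^ s / η)) η := by
    simpa [rpow_sub hη] using hasDerivAt_rpow_const (p := s) (Or.inl hη.ne')
  refine (hpow.fun_div (hpow.add_const a) h).congr_deriv ?_
  field_simp

theorem rpow_div_rpow_add_mem_Icc {a η : ℝ} (s : ℝ) (ha : 0 ≤ a) (hη : 0 < η) :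
    η ^ s / (η ^ s + a) ∈ Icc (0 : ℝ) 1 := by
  have hηs : 0 < η ^ s := rpow_pos_of_pos hη s
  exact ⟨by positivity, (div_le_one (by positivity)).mpr (le_add_of_nonneg_right ha)⟩

theorem G_derivative_bound_general (a s : ℝ) (ha : 0 < a) (n : ℕ) :
    ∃ C > 0, ∀ η : ℝ, 0 < η →
      |iteratedDeriv n (fun t : ℝ => t ^ s / (t ^ s + a)) η| ≤ C * η ^ (-(n : ℝ)) := by
  have hlogistic : ∀ η : ℝ, 0 < η → HasDerivAt (fun t : ℝ => t ^ s / (t ^ s + a))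
      ((C s * X * (1 - X)).eval (η ^ s / (η ^ s + a)) / η) η := fun η hη => by
    have hden : η ^ s + a ≠ 0 := (add_pos (rpow_pos_of_pos hη s) ha).ne'
    simpa using hasDerivAt_rpow_div_rpow_add a s hη hden
  exact exists_abs_iteratedDeriv_le_mul_rpow_neg hlogistic isCompact_Icc
    (fun η hη => rpow_div_rpow_add_mem_Icc s ha.le hη) n

/-- For `a > 0` and `s ∈ (0,1)`, the function `G_a(η) = η^s/(η^s + a)` on `(0,∞)` satisfies
`|G_a^{(n)}(η)| ≤ C η^{-n}` for every `n`, with `C = C(n,s,a)`. -/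
theorem G_derivative_bound (a s : ℝ) (ha : 0 < a) (hs : s ∈ Set.Ioo (0:ℝ) 1) (n : ℕ) :
    ∃ C > 0, ∀ η : ℝ, 0 < η →
      |iteratedDeriv n (fun t : ℝ => t ^ s / (t ^ s + a)) η| ≤ C * η ^ (-(n : ℝ)) :=
  G_derivative_bound_general a s ha n
end

section
/- For s ∈ (0,1), the symbol m(ξ) = (4π²|ξ|²/(1 + 4π²|ξ|²))^s is bounded by 1 on ℝ^d, and the symbol m₂(ξ) = ℓ₂(4π²|ξ|²)^s / ((4π²|ξ|²)^s(ℓ₁+ℓ₂) + λ) (with ℓ₁, ℓ₂, λ > 0) satisfies, for every multi-index β with entries in {0,1}, the Marcinkiewicz-type bound |∂_β m₂(ξ)| ≤ C ∏_{j=1}^d |ξ_j|^{-β_j} for all ξ with nonzero coordinates, where C depends on d, s, ℓ₁, ℓ₂, λ, β. -/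
/-!
Write `m₂(ξ) = F(|ξ|²)` with `F(t) = ℓ₂ (ct)^s / ((ct)^s (ℓ₁ + ℓ₂) + λ) = A - A' (a t^s + λ)⁻¹`.
Derivatives of `F` stay among finite sums of terms `c t^p (a t^s + λ)^{-μ}` with
`-k ≤ p ≤ μ s - k`, each of which is `O(t^{-k})` on `(0, ∞)`; hence `|F⁽ᵏ⁾(t)| ≤ C t^{-k}`.
For distinct coordinates `j₁, …, jₖ` the chain rule gives
`∂_{j₁} ⋯ ∂_{jₖ} F(|ξ|²) = F⁽ᵏ⁾(|ξ|²) ∏ᵢ 2ξ_{jᵢ}`, and `|ξ_j| ≤ |ξ|` bounds each factor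
`|ξ_j| / |ξ|²` by `|ξ_j|⁻¹`.
-/

open Real Set Filter Topology

namespace Marcinkiewicz

lemma abs_rpow_div_one_add_le_one {x s : ℝ} (hx : 0 ≤ x) (hs : 0 ≤ s) :
    |(x / (1 + x)) ^ s| ≤ 1 := by
  have hq : 0 ≤ x / (1 + x) := by positivity
  rw [abs_of_nonneg (rpow_nonneg hq s)]
  exact rpow_le_one hq (div_le_one_of_le₀ (by linarith) (by positivity)) hs

noncomputable def symbolTerm (a b s c p μ : ℝ) (t : ℝ) : ℝ :=
  c * t ^ p * (a * t ^ s + b) ^ (-μ)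

/-- Finite sums of terms `c t^p (a t^s + b)^{-μ}` with `μ ≥ 0` and `-k ≤ p ≤ μ s - k`: this
window of exponents makes each term `O(t^{-k})` both at `0` and at `∞`, and differentiation moves
it from `k` to `k + 1`. -/
inductive IsSymbol (a b s : ℝ) : ℕ → (ℝ → ℝ) → Prop
  | term (k : ℕ) (c p μ : ℝ) (hμ : 0 ≤ μ) (hp : -(k : ℝ) ≤ p) (hp' : p ≤ μ * s - k) :
      IsSymbol a b s k (symbolTerm a b s c p μ)
  | add {k : ℕ} {f g : ℝ → ℝ} :
      IsSymbol a b s k f → IsSymbol a b s k g → IsSymbol a b s k fun t => f t + g t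

def HasSymbolBounds (F : ℝ → ℝ) : Prop :=
  ∀ k : ℕ, (∀ t, 0 < t → DifferentiableAt ℝ (iteratedDeriv k F) t) ∧
    ∃ C, ∀ t, 0 < t → |iteratedDeriv k F t| ≤ C / t ^ k

section SymbolClass

variable {a b s : ℝ}

lemma hasDerivAt_symbolTerm (ha : 0 ≤ a) (hb : 0 < b) (c p μ : ℝ) {t : ℝ} (ht : 0 < t) :
    HasDerivAt (symbolTerm a b s c p μ)
      (symbolTerm a b s (c * p) (p - 1) μ t +
        symbolTerm a b s (-(c * μ * a * s)) (p + s - 1) (μ + 1) t) t := by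
  have hw : 0 < a * t ^ s + b := by positivity
  have hpow : HasDerivAt (fun t : ℝ => t ^ p) (p * t ^ (p - 1)) t :=
    hasDerivAt_rpow_const (Or.inl ht.ne')
  have hbase : HasDerivAt (fun t : ℝ => a * t ^ s + b) (a * (s * t ^ (s - 1))) t :=
    ((hasDerivAt_rpow_const (Or.inl ht.ne')).const_mul a).add_const b
  refine ((hpow.const_mul c).mul (hbase.rpow_const (p := -μ) (Or.inl hw.ne'))).congr_deriv ?_
  simp only [symbolTerm, show -(μ + 1) = -μ - 1 by ring,
    show p + s - 1 = p + (s - 1) by ring, rpow_add ht]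
  ring

lemma abs_symbolTerm_le (ha : 0 < a) (hb : 0 < b) {k : ℕ} {c p μ : ℝ} (hμ : 0 ≤ μ)
    (hp : -(k : ℝ) ≤ p) (hp' : p ≤ μ * s - k) {t : ℝ} (ht : 0 < t) :
    |symbolTerm a b s c p μ t| ≤ |c| * (a ^ (-μ) + b ^ (-μ)) * t ^ (-(k : ℝ)) := by
  suffices h : t ^ p * (a * t ^ s + b) ^ (-μ) ≤ (a ^ (-μ) + b ^ (-μ)) * t ^ (-(k : ℝ)) by
    have : 0 ≤ t ^ p * (a * t ^ s + b) ^ (-μ) := by positivity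
    rw [symbolTerm, mul_assoc, abs_mul, abs_of_nonneg this, mul_assoc]
    exact mul_le_mul_of_nonneg_left h (abs_nonneg c)
  have ha' : 0 ≤ a ^ (-μ) := by positivity
  have hb' : 0 ≤ b ^ (-μ) := by positivity
  have htk : 0 ≤ t ^ (-(k : ℝ)) := by positivity
  -- near `∞` the factor `(a t^s + b)^{-μ}` supplies the decay `t^{-μ s}`, near `0` it is bounded
  rcases le_total 1 t with ht1 | ht1
  · have hwa : (a * t ^ s + b) ^ (-μ) ≤ (a * t ^ s) ^ (-μ) :=
      rpow_le_rpow_of_nonpos (by positivity) (by linarith) (by linarith)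
    calc t ^ p * (a * t ^ s + b) ^ (-μ) ≤ t ^ p * (a * t ^ s) ^ (-μ) :=
          mul_le_mul_of_nonneg_left hwa (by positivity)
      _ = a ^ (-μ) * t ^ (p - μ * s) := by
          rw [mul_rpow ha.le (by positivity), ← rpow_mul ht.le, sub_eq_add_neg,
            rpow_add ht]
          ring_nf
      _ ≤ a ^ (-μ) * t ^ (-(k : ℝ)) :=
          mul_le_mul_of_nonneg_left (rpow_le_rpow_of_exponent_le ht1 (by linarith)) ha'
      _ ≤ (a ^ (-μ) + b ^ (-μ)) * t ^ (-(k : ℝ)) := by nlinarith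
  · have hwb : (a * t ^ s + b) ^ (-μ) ≤ b ^ (-μ) :=
      rpow_le_rpow_of_nonpos hb (by have := rpow_nonneg ht.le s; nlinarith) (by linarith)
    calc t ^ p * (a * t ^ s + b) ^ (-μ) ≤ t ^ (-(k : ℝ)) * b ^ (-μ) :=
          mul_le_mul (rpow_le_rpow_of_exponent_ge ht ht1 hp) hwb (by positivity) htk
      _ ≤ (a ^ (-μ) + b ^ (-μ)) * t ^ (-(k : ℝ)) := by nlinarith

lemma IsSymbol.exists_hasDerivAt (ha : 0 ≤ a) (hb : 0 < b) (hs : 0 ≤ s) {k : ℕ}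
    {f : ℝ → ℝ} (hf : IsSymbol a b s k f) :
    ∃ f', IsSymbol a b s (k + 1) f' ∧ ∀ t, 0 < t → HasDerivAt f (f' t) t := by
  induction hf with
  | term c p μ hμ hp hp' =>
      refine ⟨_, .add (.term _ _ _ _ hμ ?_ ?_) (.term _ _ _ _ (by linarith) ?_ ?_),
        fun t ht => hasDerivAt_symbolTerm ha hb c p μ ht⟩ <;> push_cast <;> linarith
  | add _ _ ihf ihg =>
      obtain ⟨f', hf', hf'_deriv⟩ := ihf
      obtain ⟨g', hg', hg'_deriv⟩ := ihg
      exact ⟨_, hf'.add hg', fun t ht => (hf'_deriv t ht).add (hg'_deriv t ht)⟩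

lemma IsSymbol.exists_bound (ha : 0 < a) (hb : 0 < b) {k : ℕ} {f : ℝ → ℝ}
    (hf : IsSymbol a b s k f) : ∃ C, ∀ t, 0 < t → |f t| ≤ C * t ^ (-(k : ℝ)) := by
  induction hf with
  | term c p μ hμ hp hp' => exact ⟨_, fun t ht => abs_symbolTerm_le ha hb hμ hp hp' ht⟩
  | add _ _ ihf ihg =>
      obtain ⟨C₁, hC₁⟩ := ihf
      obtain ⟨C₂, hC₂⟩ := ihg
      exact ⟨C₁ + C₂, fun t ht => (abs_add_le _ _).trans <| by
        linarith [hC₁ t ht, hC₂ t ht]⟩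

lemma IsSymbol.exists_eqOn_iteratedDeriv (ha : 0 ≤ a) (hb : 0 < b) (hs : 0 ≤ s)
    {F g : ℝ → ℝ} (hg : IsSymbol a b s 0 g) (hFg : EqOn F g (Ioi 0)) (k : ℕ) :
    ∃ gₖ, IsSymbol a b s k gₖ ∧ EqOn (iteratedDeriv k F) gₖ (Ioi 0) := by
  induction k with
  | zero => exact ⟨g, hg, by simpa using hFg⟩
  | succ k ih =>
      obtain ⟨gₖ, hgₖ, hFgₖ⟩ := ih
      obtain ⟨g', hg', hgₖ_deriv⟩ := hgₖ.exists_hasDerivAt ha hb hs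
      refine ⟨g', hg', fun t (ht : 0 < t) => ?_⟩
      rw [iteratedDeriv_succ, (hFgₖ.eventuallyEq_of_mem (Ioi_mem_nhds ht)).deriv_eq]
      exact (hgₖ_deriv t ht).deriv

lemma IsSymbol.hasSymbolBounds (ha : 0 < a) (hb : 0 < b) (hs : 0 ≤ s) {F g : ℝ → ℝ}
    (hg : IsSymbol a b s 0 g) (hFg : EqOn F g (Ioi 0)) : HasSymbolBounds F := by
  intro k
  obtain ⟨gₖ, hgₖ, hFgₖ⟩ := hg.exists_eqOn_iteratedDeriv ha.le hb hs hFg k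
  obtain ⟨g', -, hgₖ_deriv⟩ := hgₖ.exists_hasDerivAt ha.le hb hs
  obtain ⟨C, hC⟩ := hgₖ.exists_bound ha hb
  refine ⟨fun t ht => ?_, C, fun t ht => ?_⟩
  · exact ((hgₖ_deriv t ht).differentiableAt).congr_of_eventuallyEq
      (hFgₖ.eventuallyEq_of_mem (Ioi_mem_nhds ht))
  · rw [hFgₖ ht, div_eq_mul_inv, ← rpow_natCast, ← rpow_neg ht.le]
    exact hC t ht

end SymbolClass

lemma hasSymbolBounds_rpow_div {A B c lam s : ℝ} (hB : 0 < B) (hc : 0 < c) (hlam : 0 < lam)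
    (hs : 0 ≤ s) : HasSymbolBounds fun t => A * (c * t) ^ s / ((c * t) ^ s * B + lam) := by
  -- with `x = (c t)^s`: `A x / (x B + λ) = A / B - (A λ / B) (x B + λ)⁻¹`
  refine IsSymbol.hasSymbolBounds (a := c ^ s * B) (by positivity) hlam hs
    (.add (.term 0 (A / B) 0 0 le_rfl (by simp) (by simp))
      (.term 0 (-(A * lam / B)) 0 1 zero_le_one (by simp) (by simpa using hs))) ?_
  intro t (ht : 0 < t)
  simp only [symbolTerm, rpow_zero, neg_zero, rpow_neg_one, mul_rpow hc.le ht.le]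
  field_simp
  ring

section PartialDerivatives

variable {ι : Type*} [Fintype ι] [DecidableEq ι]

noncomputable def partialDeriv (j : ι) (g : EuclideanSpace ℝ ι → ℝ) (ζ : EuclideanSpace ℝ ι) :
    ℝ :=
  fderiv ℝ g ζ (EuclideanSpace.single j 1)

noncomputable def iteratedPartialDeriv (L : List ι) (g : EuclideanSpace ℝ ι → ℝ) :
    EuclideanSpace ℝ ι → ℝ :=
  L.foldr partialDeriv g

lemma exists_hasFDerivAt_prod_coord (L : List ι) (ζ : EuclideanSpace ℝ ι) :
    ∃ D : EuclideanSpace ℝ ι →L[ℝ] ℝ,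
      HasFDerivAt (fun x : EuclideanSpace ℝ ι => (L.map fun j => 2 * x j).prod) D ζ ∧
      ∀ i ∉ L, D (EuclideanSpace.single i 1) = 0 := by
  induction L with
  | nil => exact ⟨0, by simpa using hasFDerivAt_const (1 : ℝ) ζ, fun _ _ => rfl⟩
  | cons j L ih =>
      obtain ⟨D, hD, hD_single⟩ := ih
      have hj : HasFDerivAt (fun x : EuclideanSpace ℝ ι => 2 * x j)
          ((2 : ℝ) • EuclideanSpace.proj (𝕜 := ℝ) j) ζ :=
        (EuclideanSpace.proj (𝕜 := ℝ) j).hasFDerivAt.const_mul (2 : ℝ)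
      refine ⟨_, hj.mul hD, fun i hi => ?_⟩
      obtain ⟨hij, hiL⟩ := List.mem_cons.not.trans not_or |>.mp hi
      simp [hD_single i hiL, Ne.symm hij]

theorem iteratedPartialDeriv_comp_norm_sq {F : ℝ → ℝ}
    (hF : ∀ k, ∀ t, 0 < t → DifferentiableAt ℝ (iteratedDeriv k F) t) {L : List ι}
    (hL : L.Nodup) {ζ : EuclideanSpace ℝ ι} (hζ : ζ ≠ 0) :
    iteratedPartialDeriv L (fun x => F (‖x‖ ^ 2)) ζ =
      iteratedDeriv L.length F (‖ζ‖ ^ 2) * (L.map fun j => 2 * ζ j).prod := by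
  induction L generalizing ζ with
  | nil => simp [iteratedPartialDeriv]
  | cons j L ih =>
      obtain ⟨hjL, hL⟩ := List.nodup_cons.mp hL
      have hnorm : 0 < ‖ζ‖ ^ 2 := by positivity
      have hlocal : iteratedPartialDeriv L (fun x => F (‖x‖ ^ 2)) =ᶠ[𝓝 ζ]
          fun x => iteratedDeriv L.length F (‖x‖ ^ 2) * (L.map fun j => 2 * x j).prod :=
        eventually_ne_nhds hζ |>.mono fun x hx => ih hL hx
      obtain ⟨D, hD, hD_single⟩ := exists_hasFDerivAt_prod_coord L ζ
      have hradial := (hF L.length _ hnorm).hasDerivAt.comp_hasFDerivAt ζ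
          (hasStrictFDerivAt_norm_sq ζ).hasFDerivAt
      have hprod : HasFDerivAt
          (fun x => iteratedDeriv L.length F (‖x‖ ^ 2) * (L.map fun j => 2 * x j).prod) _ ζ :=
        hradial.mul hD
      rw [iteratedPartialDeriv, List.foldr_cons, ← iteratedPartialDeriv, partialDeriv,
        hlocal.fderiv_eq, hprod.fderiv]
      simp [hD_single j hjL, EuclideanSpace.inner_single_right, ← iteratedDeriv_succ]
      ring

theorem HasSymbolBounds.abs_iteratedPartialDeriv_le {F : ℝ → ℝ} (hF : HasSymbolBounds F)
    {L : List ι} (hL : L.Nodup) :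
    ∃ C > 0, ∀ ζ : EuclideanSpace ℝ ι, ζ ≠ 0 → (∀ j ∈ L, ζ j ≠ 0) →
      |iteratedPartialDeriv L (fun x => F (‖x‖ ^ 2)) ζ| ≤ C * ∏ j ∈ L.toFinset, |ζ j|⁻¹ := by
  obtain ⟨C, hC⟩ := (hF L.length).2
  refine ⟨max C 1 * 2 ^ L.length, by positivity, fun ζ hζ hcoord => ?_⟩
  have hnorm : 0 < ‖ζ‖ ^ 2 := by positivity
  have hcard : L.toFinset.card = L.length := List.toFinset_card_of_nodup hL
  have hcoord_le (j : ι) (hj : j ∈ L.toFinset) : |ζ j| / ‖ζ‖ ^ 2 ≤ |ζ j|⁻¹ := by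
    have hj0 : 0 < |ζ j| := abs_pos.mpr (hcoord j (List.mem_toFinset.mp hj))
    have hj1 : |ζ j| ≤ ‖ζ‖ := by simpa using PiLp.norm_apply_le ζ j
    calc |ζ j| / ‖ζ‖ ^ 2 ≤ |ζ j| / |ζ j| ^ 2 := by gcongr
      _ = |ζ j|⁻¹ := by field_simp
  rw [iteratedPartialDeriv_comp_norm_sq (fun k => (hF k).1) hL hζ, ← List.prod_toFinset _ hL,
    abs_mul, Finset.abs_prod]
  calc |iteratedDeriv L.length F (‖ζ‖ ^ 2)| * ∏ j ∈ L.toFinset, |2 * ζ j|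
      ≤ max C 1 / (‖ζ‖ ^ 2) ^ L.length * ∏ j ∈ L.toFinset, |2 * ζ j| := by
        gcongr
        exact (hC _ hnorm).trans (by gcongr; exact le_max_left _ _)
    _ = max C 1 * ∏ j ∈ L.toFinset, 2 * (|ζ j| / ‖ζ‖ ^ 2) := by
        rw [← hcard, ← Finset.prod_const, div_eq_mul_inv, ← Finset.prod_inv_distrib, mul_assoc,
          ← Finset.prod_mul_distrib]
        congr 1
        refine Finset.prod_congr rfl fun j _ => ?_
        rw [abs_mul, abs_two]
        ring
    _ ≤ max C 1 * ∏ j ∈ L.toFinset, 2 * |ζ j|⁻¹ := by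
        gcongr with j hj
        exact hcoord_le j hj
    _ = max C 1 * 2 ^ L.length * ∏ j ∈ L.toFinset, |ζ j|⁻¹ := by
        rw [Finset.prod_mul_distrib, Finset.prod_const, hcard, mul_assoc]

end PartialDerivatives

end Marcinkiewicz

open Marcinkiewicz in
/-- The symbol `m(ξ) = (4π²|ξ|²/(1 + 4π²|ξ|²))^s` is bounded by `1`, and the symbol
`m₂(ξ) = ℓ₂(4π²|ξ|²)^s/((4π²|ξ|²)^s(ℓ₁+ℓ₂) + λ)` satisfies the Marcinkiewicz-type bounds
`|∂_β m₂(ξ)| ≤ C ∏ |ξ_j|^{-β_j}` for every multi-index `β` with entries in `{0,1}` and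
every `ξ` with all coordinates nonzero. -/
theorem marcinkiewicz_symbol_bounds
    (d : ℕ) (s ℓ₁ ℓ₂ lam : ℝ) (hs : s ∈ Set.Ioo (0:ℝ) 1)
    (h1 : 0 < ℓ₁) (h2 : 0 < ℓ₂) (hlam : 0 < lam) :
    (∀ ξ : EuclideanSpace ℝ (Fin d),
      |(4 * Real.pi ^ 2 * ‖ξ‖ ^ 2 / (1 + 4 * Real.pi ^ 2 * ‖ξ‖ ^ 2)) ^ s| ≤ 1) ∧
    (∀ β : Fin d → Bool, ∃ C > 0, ∀ ξ : EuclideanSpace ℝ (Fin d), (∀ j, ξ j ≠ 0) →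
      |(List.foldr
          (fun (j : Fin d) (g : EuclideanSpace ℝ (Fin d) → ℝ) =>
            fun ζ => fderiv ℝ g ζ (EuclideanSpace.single j 1))
          (fun ζ : EuclideanSpace ℝ (Fin d) =>
            ℓ₂ * (4 * Real.pi ^ 2 * ‖ζ‖ ^ 2) ^ s /
              ((4 * Real.pi ^ 2 * ‖ζ‖ ^ 2) ^ s * (ℓ₁ + ℓ₂) + lam))
          ((List.finRange d).filter (fun j => β j))) ξ|
        ≤ C * ∏ j : Fin d, (if β j then |ξ j|⁻¹ else 1)) := by
  refine ⟨fun ξ => abs_rpow_div_one_add_le_one (by positivity) hs.1.le, fun β => ?_⟩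
  have hF : HasSymbolBounds fun t =>
      ℓ₂ * (4 * π ^ 2 * t) ^ s / ((4 * π ^ 2 * t) ^ s * (ℓ₁ + ℓ₂) + lam) :=
    hasSymbolBounds_rpow_div (by positivity) (by positivity) hlam hs.1.le
  obtain ⟨C, hC, hbound⟩ := hF.abs_iteratedPartialDeriv_le ((List.nodup_finRange d).filter (β ·))
  refine ⟨C, hC, fun ξ hξ => ?_⟩
  rcases eq_or_ne ξ 0 with rfl | hξ0
  · obtain rfl : d = 0 := Nat.eq_zero_of_not_pos fun hd => hξ ⟨0, hd⟩ rfl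
    simp [zero_rpow hs.1.ne', hC.le]
  · rw [← Finset.prod_filter, ← List.toFinset_finRange, ← List.toFinset_filter]
    exact hbound ξ hξ0 fun j _ => hξ j
end
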